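/- Fix p ∈ (0,1), q = 1−p and integers r, r₁, k, i with 1 ≤ i ≤ k−1, i ≤ r₁, k−i ≤ r−r₁ and 1 ≤ r₁ ≤ r−1. Then the total weight of the set A(r, r₁, k, i) equals C(k, i) · p^i · q^{k−i} · f(2r₁, i) · f(2(r−r₁), k−i), where f(2d, m) = (m/(2d−m)) · 2^{−(2d−m)} · C(2d−m, d) is the probability that the m-th return of the simple symmetric random walk to the origin occurs at time 2d. -/

import Mathlib

open Finset Filter

/-- The lattice path determined by the step sequence `σ` (`true` = step `+1`,
`false` = step `−1`), started at `0` and evaluated at time `n`.  Skew random walk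
paths of length `N` correspond bijectively to step sequences `σ : Fin N → Bool`. -/
def walk {N : ℕ} (σ : Fin N → Bool) (n : ℕ) : ℤ :=
  ∑ i : Fin N, if (i : ℕ) < n then (if σ i then (1 : ℤ) else -1) else 0

/-- The weight of a skew random walk path: a step from `0` to `1` has weight `p`,
a step from `0` to `−1` has weight `q`, and every other step has weight `1/2`. -/
noncomputable def pathWeight (p q : ℝ) {N : ℕ} (σ : Fin N → Bool) : ℝ :=
  ∏ i ∈ Finset.range N,
    (if walk σ i = 0 then (if walk σ (i + 1) = 1 then p else q) else 1 / 2)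

/-- The number of indices `1 ≤ j ≤ N` with `s j = 0` (the number of cycles of a
path returning to `0` at time `N`). -/
def numZeros {N : ℕ} (σ : Fin N → Bool) : ℕ :=
  ((Finset.Icc 1 N).filter fun j => walk σ j = 0).card

/-- The number of positive cycles: a cycle (segment between consecutive visits
to `0`) is positive iff the path is strictly positive strictly inside it, which,
steps being `±1`, holds iff the cycle starts with a step from `0` to `1`. -/
def numPosCycles {N : ℕ} (σ : Fin N → Bool) : ℕ :=
  ((Finset.range N).filter fun i => walk σ i = 0 ∧ walk σ (i + 1) = 1).card

/-- `V(s)`: the number of indices `0 ≤ i < N` with `s i ≥ 0` and `s (i+1) ≥ 0`. -/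
def numNonnegSteps {N : ℕ} (σ : Fin N → Bool) : ℕ :=
  ((Finset.range N).filter fun i => 0 ≤ walk σ i ∧ 0 ≤ walk σ (i + 1)).card

/-- The set `A(r, r₁, k, i)` of skew random walk paths of length `2r` ending at `0`,
with exactly `k` zeros among times `1,…,2r` (hence `k` cycles), exactly `i` positive
cycles, and `V(s) = 2 r₁`. -/
def setA (r r₁ k i : ℕ) : Finset (Fin (2 * r) → Bool) :=
  Finset.univ.filter fun σ =>
    walk σ (2 * r) = 0 ∧ numZeros σ = k ∧ numPosCycles σ = i ∧ numNonnegSteps σ = 2 * r₁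

/-- `f(2d, m) = (m/(2d−m)) · 2^{−(2d−m)} · C(2d−m, d)`, the probability that the
`m`-th return of the simple symmetric random walk to the origin occurs at time `2d`. -/
noncomputable def fReturn (d m : ℕ) : ℝ :=
  (m : ℝ) / ((2 * d - m : ℕ) : ℝ) * (1 / 2) ^ (2 * d - m) * (Nat.choose (2 * d - m) d : ℝ)

namespace SK
def stp {N : ℕ} (σ : Fin N → Bool) (i : ℕ) : ℤ :=
  if h : i < N then (if σ ⟨i, h⟩ then 1 else -1) else 0

lemma stp_eq_zero {N : ℕ} (σ : Fin N → Bool) {i : ℕ} (h : N ≤ i) : stp σ i = 0 := by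
  unfold stp; rw [dif_neg (by omega)]

lemma stp_cases {N : ℕ} (σ : Fin N → Bool) {i : ℕ} (h : i < N) :
    stp σ i = 1 ∨ stp σ i = -1 := by
  unfold stp; rw [dif_pos h]; cases σ ⟨i, h⟩ <;> simp

lemma walk_eq_sum_range {N : ℕ} (σ : Fin N → Bool) (n : ℕ) :
    walk σ n = ∑ i ∈ Finset.range n, stp σ i := by
  unfold walk
  have h1 : ∀ i : Fin N, (if (i:ℕ) < n then (if σ i then (1:ℤ) else -1) else 0)
      = (fun j => if j < n then stp σ j else 0) (i : ℕ) := by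
    intro i
    have : stp σ (i:ℕ) = if σ i then (1:ℤ) else -1 := by simp [stp, i.isLt]
    simp only [this]
  rw [Finset.sum_congr rfl (fun i _ => h1 i),
    Fin.sum_univ_eq_sum_range (fun j => if j < n then stp σ j else 0) N,
    ← Finset.sum_filter]
  have h2 : (Finset.range N).filter (· < n) = Finset.range (min N n) := by
    ext j; simp only [Finset.mem_filter, Finset.mem_range, Finset.mem_inter]; omega
  rw [h2]
  apply Finset.sum_subset
  · intro j hj; simp only [Finset.mem_range] at *; omega
  · intro j hj hj2; simp only [Finset.mem_range] at *
    exact stp_eq_zero σ (by omega)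

lemma walk_zero {N : ℕ} (σ : Fin N → Bool) : walk σ 0 = 0 := by
  rw [walk_eq_sum_range]; simp

lemma walk_succ {N : ℕ} (σ : Fin N → Bool) (n : ℕ) :
    walk σ (n + 1) = walk σ n + stp σ n := by
  rw [walk_eq_sum_range, walk_eq_sum_range, Finset.sum_range_succ]

lemma walk_one {N : ℕ} (σ : Fin N → Bool) : walk σ 1 = stp σ 0 := by
  rw [walk_succ, walk_zero, zero_add]

lemma walk_parity {N : ℕ} (σ : Fin N → Bool) : ∀ n, n ≤ N → Even (walk σ n + n) := by
  intro n
  induction n with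
  | zero => intro _; simp [walk_zero]
  | succ n ih =>
    intro h
    have h2 := ih (by omega)
    have h3 : walk σ (n+1) + (n+1 : ℕ) = (walk σ n + n) + (stp σ n + 1) := by
      rw [walk_succ]; push_cast; ring
    rw [h3]
    rcases stp_cases σ (show n < N by omega) with h1 | h1 <;> rw [h1]
    · exact h2.add ⟨1, by ring⟩
    · simpa using h2

lemma pos_persist {N : ℕ} (σ : Fin N → Bool) (h1 : walk σ 1 = 1) {n : ℕ} (hn : n ≤ N)
    (hnz : ∀ j, 1 ≤ j → j < n → walk σ j ≠ 0) :
    ∀ j, 1 ≤ j → j < n → 1 ≤ walk σ j := by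
  intro j
  induction j with
  | zero => omega
  | succ j ih =>
    intro _ hj
    rcases Nat.eq_zero_or_pos j with rfl | hj1
    · rw [h1]
    · have hw := ih (by omega) (by omega)
      have hne := hnz (j+1) (by omega) hj
      have := walk_succ σ j
      rcases stp_cases σ (show j < N by omega) with h2 | h2 <;> omega

lemma neg_persist {N : ℕ} (σ : Fin N → Bool) (h1 : walk σ 1 = -1) {n : ℕ} (hn : n ≤ N)
    (hnz : ∀ j, 1 ≤ j → j < n → walk σ j ≠ 0) :
    ∀ j, 1 ≤ j → j < n → walk σ j ≤ -1 := by
  intro j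
  induction j with
  | zero => omega
  | succ j ih =>
    intro _ hj
    rcases Nat.eq_zero_or_pos j with rfl | hj1
    · rw [h1]
    · have hw := ih (by omega) (by omega)
      have hne := hnz (j+1) (by omega) hj
      have := walk_succ σ j
      rcases stp_cases σ (show j < N by omega) with h2 | h2 <;> omega

/-! splitting -/

def app2 {l m : ℕ} (τ : Fin (2*l) → Bool) (ρ : Fin (2*m) → Bool) : Fin (2*(l+m)) → Bool :=
  fun j => if h : (j : ℕ) < 2*l then τ ⟨j, h⟩ else ρ ⟨(j:ℕ) - 2*l, by have := j.isLt; omega⟩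

def sp1 {l m : ℕ} (σ : Fin (2*(l+m)) → Bool) : Fin (2*l) → Bool :=
  fun j => σ ⟨(j:ℕ), by have := j.isLt; omega⟩

def sp2 {l m : ℕ} (σ : Fin (2*(l+m)) → Bool) : Fin (2*m) → Bool :=
  fun j => σ ⟨2*l + (j:ℕ), by have := j.isLt; omega⟩

lemma app2_sp {l m : ℕ} (σ : Fin (2*(l+m)) → Bool) : app2 (sp1 σ) (sp2 σ) = σ := by
  funext j
  unfold app2 sp1 sp2
  split_ifs with h
  · congr 1
  · congr 1; exact Fin.ext (by simp; omega)

lemma sp1_app2 {l m : ℕ} (τ : Fin (2*l) → Bool) (ρ : Fin (2*m) → Bool) :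
    sp1 (app2 τ ρ) = τ := by
  funext j
  unfold app2 sp1
  dsimp only
  rw [dif_pos (by simpa using j.isLt)]

lemma sp2_app2 {l m : ℕ} (τ : Fin (2*l) → Bool) (ρ : Fin (2*m) → Bool) :
    sp2 (app2 τ ρ) = ρ := by
  funext j
  unfold app2 sp2
  dsimp only
  rw [dif_neg (by omega)]
  congr 1; exact Fin.ext (by simp)

lemma stp_sp1 {l m : ℕ} (σ : Fin (2*(l+m)) → Bool) {i : ℕ} (h : i < 2*l) :
    stp (sp1 σ) i = stp σ i := by
  unfold stp sp1
  rw [dif_pos h, dif_pos (by omega)]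

lemma stp_sp2 {l m : ℕ} (σ : Fin (2*(l+m)) → Bool) (i : ℕ) :
    stp (sp2 σ) i = stp σ (2*l + i) := by
  unfold stp sp2
  by_cases h : i < 2*m
  · rw [dif_pos h, dif_pos (by omega)]
  · rw [dif_neg h, dif_neg (by omega)]

lemma walk_sp1 {l m : ℕ} (σ : Fin (2*(l+m)) → Bool) {n : ℕ} (h : n ≤ 2*l) :
    walk (sp1 σ) n = walk σ n := by
  rw [walk_eq_sum_range, walk_eq_sum_range]
  exact Finset.sum_congr rfl fun i hi => stp_sp1 σ (by simp at hi; omega)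

lemma walk_add {l m : ℕ} (σ : Fin (2*(l+m)) → Bool) (t : ℕ) :
    walk σ (2*l + t) = walk σ (2*l) + walk (sp2 σ) t := by
  rw [walk_eq_sum_range, walk_eq_sum_range, walk_eq_sum_range, Finset.sum_range_add]
  congr 1
  exact Finset.sum_congr rfl fun i _ => (stp_sp2 σ i).symm

lemma walk_sp2 {l m : ℕ} (σ : Fin (2*(l+m)) → Bool) (h0 : walk σ (2*l) = 0) (t : ℕ) :
    walk (sp2 σ) t = walk σ (2*l + t) := by
  rw [walk_add σ t, h0, zero_add]

/-! generic split lemmas for counters and products -/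

lemma prod_split {M : Type*} [CommMonoid M] (f : ℕ → M) {n a b : ℕ} (h : n = a + b) :
    ∏ i ∈ range n, f i = (∏ i ∈ range a, f i) * ∏ i ∈ range b, f (a + i) := by
  subst h; exact Finset.prod_range_add f a b

lemma card_filter_Icc_split {n a b : ℕ} (h : n = a + b) (P : ℕ → Prop) [DecidablePred P] :
    ((Icc 1 n).filter P).card
      = ((Icc 1 a).filter P).card + ((Icc 1 b).filter (fun t => P (a + t))).card := by
  subst h
  have hsp : Icc 1 (a+b) = Icc 1 a ∪ Icc (a+1) (a+b) := by
    ext j; simp only [mem_Icc, mem_union]; omega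
  rw [hsp, filter_union, card_union_of_disjoint (by
    simp only [disjoint_left, mem_filter, mem_Icc]
    rintro x ⟨h1, _⟩ ⟨h2, _⟩; omega)]
  congr 1
  have himg : (Icc (a+1) (a+b)).filter P = ((Icc 1 b).filter fun t => P (a+t)).image (a + ·) := by
    ext x
    simp only [mem_image, mem_filter, mem_Icc]
    constructor
    · rintro ⟨⟨h1, h2⟩, hP⟩
      exact ⟨x - a, ⟨⟨by omega, by omega⟩, by rwa [show a + (x-a) = x by omega]⟩, by omega⟩
    · rintro ⟨t, ⟨⟨h1, h2⟩, hP⟩, rfl⟩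
      exact ⟨⟨by omega, by omega⟩, hP⟩
  rw [himg, Finset.card_image_of_injective _ (add_right_injective a)]

lemma card_filter_range_split {n a b : ℕ} (h : n = a + b) (P : ℕ → Prop) [DecidablePred P] :
    ((range n).filter P).card
      = ((range a).filter P).card + ((range b).filter (fun t => P (a + t))).card := by
  subst h
  have hsp : range (a+b) = range a ∪ Ico a (a+b) := by
    ext j; simp only [mem_range, mem_union, mem_Ico]; omega
  rw [hsp, filter_union, card_union_of_disjoint (by
    simp only [disjoint_left, mem_filter, mem_range, mem_Ico]
    rintro x ⟨h1, _⟩ ⟨h2, _⟩; omega)]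
  congr 1
  have himg : (Ico a (a+b)).filter P = ((range b).filter fun t => P (a+t)).image (a + ·) := by
    ext x
    simp only [mem_image, mem_filter, mem_Ico, mem_range]
    constructor
    · rintro ⟨⟨h1, h2⟩, hP⟩
      exact ⟨x - a, ⟨by omega, by rwa [show a + (x-a) = x by omega]⟩, by omega⟩
    · rintro ⟨t, ⟨h1, hP⟩, rfl⟩
      exact ⟨⟨by omega, by omega⟩, hP⟩
  rw [himg, Finset.card_image_of_injective _ (add_right_injective a)]

/-! statistics split under a zero at 2*l -/

section splitstats
variable {l m : ℕ} (σ : Fin (2*(l+m)) → Bool)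

lemma numZeros_split (h0 : walk σ (2*l) = 0) :
    numZeros σ = numZeros (sp1 σ) + numZeros (sp2 σ) := by
  unfold numZeros
  rw [card_filter_Icc_split (show 2*(l+m) = 2*l + 2*m by ring)]
  congr 1
  · apply congrArg Finset.card
    apply Finset.filter_congr
    intro j hj
    simp only [mem_Icc] at hj
    rw [walk_sp1 σ hj.2]
  · apply congrArg Finset.card
    apply Finset.filter_congr
    intro t ht
    rw [walk_sp2 σ h0 t]

lemma numPos_split (h0 : walk σ (2*l) = 0) :
    numPosCycles σ = numPosCycles (sp1 σ) + numPosCycles (sp2 σ) := by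
  unfold numPosCycles
  rw [card_filter_range_split (show 2*(l+m) = 2*l + 2*m by ring)]
  congr 1
  · apply congrArg Finset.card
    apply Finset.filter_congr
    intro i hi
    simp only [mem_range] at hi
    rw [walk_sp1 σ (by omega), walk_sp1 σ (by omega)]
  · apply congrArg Finset.card
    apply Finset.filter_congr
    intro t ht
    rw [Nat.add_assoc, walk_sp2 σ h0 t, walk_sp2 σ h0 (t+1)]

lemma numNonneg_split (h0 : walk σ (2*l) = 0) :
    numNonnegSteps σ = numNonnegSteps (sp1 σ) + numNonnegSteps (sp2 σ) := by
  unfold numNonnegSteps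
  rw [card_filter_range_split (show 2*(l+m) = 2*l + 2*m by ring)]
  congr 1
  · apply congrArg Finset.card
    apply Finset.filter_congr
    intro i hi
    simp only [mem_range] at hi
    rw [walk_sp1 σ (by omega), walk_sp1 σ (by omega)]
  · apply congrArg Finset.card
    apply Finset.filter_congr
    intro t ht
    rw [Nat.add_assoc, walk_sp2 σ h0 t, walk_sp2 σ h0 (t+1)]

lemma pathWeight_split (p q : ℝ) (h0 : walk σ (2*l) = 0) :
    pathWeight p q σ = pathWeight p q (sp1 σ) * pathWeight p q (sp2 σ) := by
  unfold pathWeight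
  rw [prod_split _ (show 2*(l+m) = 2*l + 2*m by ring)]
  congr 1
  · apply Finset.prod_congr rfl
    intro i hi
    simp only [mem_range] at hi
    rw [walk_sp1 σ (by omega), walk_sp1 σ (by omega)]
  · apply Finset.prod_congr rfl
    intro t ht
    rw [Nat.add_assoc, walk_sp2 σ h0 t, walk_sp2 σ h0 (t+1)]

lemma walk_end_split (h0 : walk σ (2*l) = 0) :
    walk σ (2*(l+m)) = walk (sp2 σ) (2*m) := by
  rw [walk_sp2 σ h0 (2*m)]
  exact congrArg (walk σ) (by ring)

end splitstats

/-! cycles -/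

def IsCyc {l : ℕ} (b : Bool) (τ : Fin (2*l) → Bool) : Prop :=
  walk τ (2*l) = 0 ∧ (∀ j ∈ Finset.Ico 1 (2*l), walk τ j ≠ 0) ∧
    walk τ 1 = (if b then 1 else -1)

instance {l : ℕ} (b : Bool) : DecidablePred (IsCyc (l := l) b) := fun τ => by
  unfold IsCyc; infer_instance

def cyc (l : ℕ) (b : Bool) : Finset (Fin (2*l) → Bool) :=
  Finset.univ.filter (IsCyc b)

lemma mem_cyc {l : ℕ} {b : Bool} {τ : Fin (2*l) → Bool} :
    τ ∈ cyc l b ↔ IsCyc b τ := by simp [cyc]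

lemma cyc_pos {l : ℕ} {b : Bool} {τ : Fin (2*l) → Bool} (h : τ ∈ cyc l b) : 1 ≤ l := by
  rw [mem_cyc] at h
  by_contra hl
  have hN : (2*l : ℕ) = 0 := by omega
  have : walk τ 1 = 0 := by rw [walk_one]; exact stp_eq_zero τ (by omega)
  rcases h with ⟨-, -, h3⟩
  cases b <;> simp_all

lemma cyc_walk_pos {l : ℕ} {τ : Fin (2*l) → Bool} (h : τ ∈ cyc l true) :
    ∀ j, 1 ≤ j → j < 2*l → 1 ≤ walk τ j := by
  rw [mem_cyc] at h
  obtain ⟨h1, h2, h3⟩ := h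
  exact pos_persist τ (by simpa using h3) le_rfl
    (fun j hj1 hj2 => h2 j (Finset.mem_Ico.mpr ⟨hj1, hj2⟩))

lemma cyc_walk_neg {l : ℕ} {τ : Fin (2*l) → Bool} (h : τ ∈ cyc l false) :
    ∀ j, 1 ≤ j → j < 2*l → walk τ j ≤ -1 := by
  rw [mem_cyc] at h
  obtain ⟨h1, h2, h3⟩ := h
  exact neg_persist τ (by simpa using h3) le_rfl
    (fun j hj1 hj2 => h2 j (Finset.mem_Ico.mpr ⟨hj1, hj2⟩))

lemma numZeros_cyc {l : ℕ} {b : Bool} {τ : Fin (2*l) → Bool} (h : τ ∈ cyc l b) :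
    numZeros τ = 1 := by
  have hl := cyc_pos h
  rw [mem_cyc] at h
  obtain ⟨h1, h2, h3⟩ := h
  unfold numZeros
  have : (Finset.Icc 1 (2*l)).filter (fun j => walk τ j = 0) = {2*l} := by
    ext j
    simp only [mem_filter, mem_Icc, mem_singleton]
    constructor
    · rintro ⟨⟨hj1, hj2⟩, hj3⟩
      by_contra hne
      exact h2 j (Finset.mem_Ico.mpr ⟨hj1, by omega⟩) hj3
    · rintro rfl
      exact ⟨⟨by omega, le_rfl⟩, h1⟩
  rw [this, Finset.card_singleton]

lemma numPos_cyc {l : ℕ} {b : Bool} {τ : Fin (2*l) → Bool} (h : τ ∈ cyc l b) :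
    numPosCycles τ = if b then 1 else 0 := by
  have hl := cyc_pos h
  have hc := h
  rw [mem_cyc] at h
  obtain ⟨h1, h2, h3⟩ := h
  unfold numPosCycles
  cases b
  · simp only [Bool.false_eq_true, if_false]
    convert Finset.card_empty
    rw [Finset.filter_eq_empty_iff]
    intro i hi
    simp only [mem_range] at hi
    rcases Nat.eq_zero_or_pos i with rfl | hi1
    · rw [walk_zero, walk_one] at *
      norm_num at h3
      intro hcon
      rw [h3] at hcon
      norm_num at hcon
    · intro hcon
      exact h2 i (Finset.mem_Ico.mpr ⟨hi1, hi⟩) hcon.1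
  · have : (Finset.range (2*l)).filter (fun i => walk τ i = 0 ∧ walk τ (i+1) = 1) = {0} := by
      ext i
      simp only [mem_filter, mem_range, mem_singleton]
      constructor
      · rintro ⟨hi, hw, _⟩
        by_contra hne
        exact h2 i (Finset.mem_Ico.mpr ⟨by omega, hi⟩) hw
      · rintro rfl
        exact ⟨by omega, walk_zero τ, by simpa using h3⟩
    rw [this, Finset.card_singleton]
    simp

lemma numNonneg_cyc {l : ℕ} {b : Bool} {τ : Fin (2*l) → Bool} (h : τ ∈ cyc l b) :
    numNonnegSteps τ = if b then 2*l else 0 := by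
  have hl := cyc_pos h
  have hc := h
  rw [mem_cyc] at h
  obtain ⟨h1, h2, h3⟩ := h
  unfold numNonnegSteps
  cases b
  · simp only [Bool.false_eq_true, if_false]
    convert Finset.card_empty
    rw [Finset.filter_eq_empty_iff]
    intro i hi
    simp only [mem_range] at hi
    rcases Nat.eq_zero_or_pos i with rfl | hi1
    · intro hcon
      have := hcon.2
      norm_num at h3 this
      omega
    · intro hcon
      have := cyc_walk_neg hc i hi1 hi
      have := hcon.1
      omega
  · have hpos := cyc_walk_pos hc
    have : (Finset.range (2*l)).filter (fun i => 0 ≤ walk τ i ∧ 0 ≤ walk τ (i+1)) =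
        Finset.range (2*l) := by
      apply Finset.filter_true_of_mem
      intro i hi
      simp only [mem_range] at hi
      constructor
      · rcases Nat.eq_zero_or_pos i with rfl | hi1
        · rw [walk_zero]
        · exact le_trans (by omega) (hpos i hi1 hi)
      · rcases Nat.lt_or_ge (i+1) (2*l) with hlt | hge
        · exact le_trans (by omega) (hpos (i+1) (by omega) hlt)
        · have : i + 1 = 2*l := by omega
          rw [this, h1]
    rw [this, Finset.card_range]
    simp

lemma pathWeight_cyc (p q : ℝ) {l : ℕ} {b : Bool} {τ : Fin (2*l) → Bool} (h : τ ∈ cyc l b) :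
    pathWeight p q τ = (if b then p else q) * (1/2 : ℝ)^(2*l - 1) := by
  have hl := cyc_pos h
  rw [mem_cyc] at h
  obtain ⟨h1, h2, h3⟩ := h
  unfold pathWeight
  have hpeel : ∀ f : ℕ → ℝ, ∏ i ∈ range (2*l), f i = f 0 * ∏ i ∈ range (2*l - 1), f (i+1) := by
    intro f
    rw [prod_split f (show 2*l = 1 + (2*l - 1) by omega), Finset.prod_range_one]
    congr 1
    apply Finset.prod_congr rfl
    intro i _
    congr 1
    omega
  rw [hpeel]
  congr 1
  · rw [walk_zero]
    simp only [if_pos rfl]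
    rw [h3]
    cases b <;> norm_num
  · have heq : (∏ i ∈ range (2*l - 1),
        if walk τ (i + 1) = 0 then (if walk τ (i + 1 + 1) = 1 then p else q) else 1 / 2)
        = ∏ _i ∈ range (2*l - 1), (1/2 : ℝ) := by
      apply Finset.prod_congr rfl
      intro i hi
      simp only [mem_range] at hi
      rw [if_neg (h2 (i+1) (Finset.mem_Ico.mpr ⟨by omega, by omega⟩))]
    rw [heq, Finset.prod_const, Finset.card_range]

def Ecnt (l : ℕ) : ℕ := (cyc l true).card

def negp {N : ℕ} (σ : Fin N → Bool) : Fin N → Bool := fun i => !(σ i)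

lemma stp_negp {N : ℕ} (σ : Fin N → Bool) (i : ℕ) : stp (negp σ) i = - stp σ i := by
  unfold stp negp
  by_cases h : i < N
  · rw [dif_pos h, dif_pos h]
    cases σ ⟨i, h⟩ <;> simp
  · rw [dif_neg h, dif_neg h]; simp

lemma walk_negp {N : ℕ} (σ : Fin N → Bool) (n : ℕ) : walk (negp σ) n = - walk σ n := by
  rw [walk_eq_sum_range, walk_eq_sum_range, ← Finset.sum_neg_distrib]
  exact Finset.sum_congr rfl fun i _ => stp_negp σ i

lemma negp_negp {N : ℕ} (σ : Fin N → Bool) : negp (negp σ) = σ := by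
  funext i; simp [negp]

lemma card_cyc_false (l : ℕ) : (cyc l false).card = Ecnt l := by
  unfold Ecnt
  apply Finset.card_bij' (fun τ _ => negp τ) (fun τ _ => negp τ)
  · intro τ hτ
    rw [mem_cyc] at *
    obtain ⟨h1, h2, h3⟩ := hτ
    refine ⟨by rw [walk_negp, h1, neg_zero], fun j hj => by rw [walk_negp]; simpa using h2 j hj, ?_⟩
    rw [walk_negp, h3]
    norm_num
  · intro τ hτ
    rw [mem_cyc] at *
    obtain ⟨h1, h2, h3⟩ := hτ
    refine ⟨by rw [walk_negp, h1, neg_zero], fun j hj => by rw [walk_negp]; simpa using h2 j hj, ?_⟩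
    rw [walk_negp, h3]
    norm_num
  · intro τ _; exact negp_negp τ
  · intro τ _; exact negp_negp τ

/-! first zero -/

noncomputable def fz {N : ℕ} (σ : Fin N → Bool) : ℕ := sInf {j | 1 ≤ j ∧ walk σ j = 0}

lemma fz_spec {N : ℕ} {σ : Fin N → Bool} {z : ℕ} (hz : 1 ≤ z) (h0 : walk σ z = 0) :
    1 ≤ fz σ ∧ walk σ (fz σ) = 0 := by
  have hne : {j | 1 ≤ j ∧ walk σ j = 0}.Nonempty := ⟨z, hz, h0⟩
  exact Nat.sInf_mem hne

lemma fz_le {N : ℕ} {σ : Fin N → Bool} {z : ℕ} (hz : 1 ≤ z) (h0 : walk σ z = 0) :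
    fz σ ≤ z :=
  Nat.sInf_le (show z ∈ {j | 1 ≤ j ∧ walk σ j = 0} from ⟨hz, h0⟩)

lemma fz_min {N : ℕ} {σ : Fin N → Bool} :
    ∀ j, 1 ≤ j → j < fz σ → walk σ j ≠ 0 := by
  intro j hj1 hj2 hcon
  have : fz σ ≤ j := Nat.sInf_le (show j ∈ {j | 1 ≤ j ∧ walk σ j = 0} from ⟨hj1, hcon⟩)
  omega

lemma fz_eq {N : ℕ} {σ : Fin N → Bool} {z : ℕ} (hz : 1 ≤ z) (h0 : walk σ z = 0)
    (hall : ∀ j, 1 ≤ j → j < z → walk σ j ≠ 0) : fz σ = z := by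
  have h1 := fz_le hz h0
  have h2 := fz_spec hz h0
  by_contra hne
  exact hall (fz σ) h2.1 (by omega) h2.2

lemma fz_even {N : ℕ} {σ : Fin N → Bool} {z : ℕ} (hz : 1 ≤ z) (h0 : walk σ z = 0)
    (hN : z ≤ N) : 2 * (fz σ / 2) = fz σ := by
  have h2 := fz_spec hz h0
  have h3 := fz_le hz h0
  have hpar := walk_parity σ (fz σ) (by omega)
  rw [h2.2] at hpar
  simp only [zero_add] at hpar
  obtain ⟨c, hc⟩ := hpar
  have : (fz σ : ℤ) = 2 * c := by omega
  omega

/-! fiber lemmas -/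

lemma mem_setA {r r₁ k i : ℕ} {σ : Fin (2*r) → Bool} :
    σ ∈ setA r r₁ k i ↔
      walk σ (2*r) = 0 ∧ numZeros σ = k ∧ numPosCycles σ = i ∧ numNonnegSteps σ = 2*r₁ := by
  simp [setA]

lemma sum_cyc_true (p q : ℝ) (l : ℕ) :
    ∑ τ ∈ cyc l true, pathWeight p q τ = (p * (1/2:ℝ)^(2*l - 1)) * Ecnt l := by
  rw [Finset.sum_congr rfl (fun τ hτ => pathWeight_cyc p q hτ), Finset.sum_const,
    nsmul_eq_mul, mul_comm]
  norm_num [Ecnt]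

lemma sum_cyc_false (p q : ℝ) (l : ℕ) :
    ∑ τ ∈ cyc l false, pathWeight p q τ = (q * (1/2:ℝ)^(2*l - 1)) * Ecnt l := by
  rw [Finset.sum_congr rfl (fun τ hτ => pathWeight_cyc p q hτ), Finset.sum_const,
    nsmul_eq_mul, mul_comm]
  norm_num
  left
  exact_mod_cast card_cyc_false l

lemma fiber_true (p q : ℝ) (l m r₁ k i : ℕ) (hl : 1 ≤ l) (hk : 1 ≤ k) (hi : 1 ≤ i)
    (hlr : l ≤ r₁) :
    ∑ σ ∈ (setA (l+m) r₁ k i).filter (fun σ => fz σ = 2*l ∧ walk σ 1 = 1), pathWeight p q σ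
    = (p * (1/2:ℝ)^(2*l - 1) * (Ecnt l)) *
        ∑ ρ ∈ setA m (r₁ - l) (k-1) (i-1), pathWeight p q ρ := by
  have hmem : ∀ σ : Fin (2*(l+m)) → Bool,
      (σ ∈ (setA (l+m) r₁ k i).filter (fun σ => fz σ = 2*l ∧ walk σ 1 = 1)) ↔
      (sp1 σ ∈ cyc l true ∧ sp2 σ ∈ setA m (r₁ - l) (k-1) (i-1)) := by
    intro σ
    rw [Finset.mem_filter, mem_setA, mem_setA, mem_cyc]
    constructor
    · rintro ⟨⟨hend, hz, hp, hn⟩, hfz, h1⟩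
      have h0 : walk σ (2*l) = 0 := by
        have := (fz_spec (show 1 ≤ 2*(l+m) by omega) hend).2
        rwa [hfz] at this
      have hno : ∀ j, 1 ≤ j → j < 2*l → walk σ j ≠ 0 := by
        intro j hj1 hj2
        exact fz_min j hj1 (by omega)
      have hc1 : IsCyc true (sp1 σ) := by
        refine ⟨by rw [walk_sp1 σ le_rfl]; exact h0, ?_, ?_⟩
        · intro j hj
          simp only [Finset.mem_Ico] at hj
          rw [walk_sp1 σ (by omega)]
          exact hno j hj.1 hj.2
        · rw [walk_sp1 σ (by omega)]; simpa using h1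
      have hc1' : sp1 σ ∈ cyc l true := mem_cyc.mpr hc1
      have hz1 : numZeros (sp1 σ) = 1 := numZeros_cyc hc1'
      have hp1 : numPosCycles (sp1 σ) = 1 := by simpa using numPos_cyc hc1'
      have hn1 : numNonnegSteps (sp1 σ) = 2*l := by simpa using numNonneg_cyc hc1'
      have hzs := numZeros_split σ h0
      have hps := numPos_split σ h0
      have hns := numNonneg_split σ h0
      refine ⟨hc1, ?_, ?_, ?_, ?_⟩
      · rw [← walk_end_split σ h0]; exact hend
      · omega
      · omega
      · omega
    · rintro ⟨hc1, hend2, hz2, hp2, hn2⟩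
      have hc1' : sp1 σ ∈ cyc l true := mem_cyc.mpr hc1
      have h0 : walk σ (2*l) = 0 := by rw [← walk_sp1 σ le_rfl]; exact hc1.1
      have hno : ∀ j, 1 ≤ j → j < 2*l → walk σ j ≠ 0 := by
        intro j hj1 hj2
        rw [← walk_sp1 σ (by omega)]
        exact hc1.2.1 j (Finset.mem_Ico.mpr ⟨hj1, hj2⟩)
      have hz1 : numZeros (sp1 σ) = 1 := numZeros_cyc hc1'
      have hp1 : numPosCycles (sp1 σ) = 1 := by simpa using numPos_cyc hc1'
      have hn1 : numNonnegSteps (sp1 σ) = 2*l := by simpa using numNonneg_cyc hc1'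
      have hzs := numZeros_split σ h0
      have hps := numPos_split σ h0
      have hns := numNonneg_split σ h0
      refine ⟨⟨by rw [walk_end_split σ h0]; exact hend2, by omega, by omega, by omega⟩,
        fz_eq (by omega) h0 hno, ?_⟩
      have := hc1.2.2
      rw [walk_sp1 σ (by omega)] at this
      simpa using this
  rw [Finset.sum_bij' (i := fun σ _ => (sp1 σ, sp2 σ)) (j := fun x _ => app2 x.1 x.2)
    (hi := ?_) (hj := ?_) (left_neg := ?_) (right_neg := ?_) (h := ?_)
    (t := (cyc l true) ×ˢ (setA m (r₁ - l) (k-1) (i-1)))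
    (g := fun x => pathWeight p q x.1 * pathWeight p q x.2)]
  · rw [Finset.sum_product]
    rw [← Finset.sum_mul_sum]
    rw [sum_cyc_true p q l]
  · intro σ hσ
    rw [Finset.mem_product]
    exact (hmem σ).mp hσ
  · intro x hx
    rw [Finset.mem_product] at hx
    apply (hmem _).mpr
    rw [sp1_app2, sp2_app2]
    exact hx
  · intro σ _; exact app2_sp σ
  · intro x _; simp [sp1_app2, sp2_app2]
  · intro σ hσ
    have h := ((hmem σ).mp hσ).1
    have h0 : walk σ (2*l) = 0 := by
      rw [← walk_sp1 σ le_rfl]; exact (mem_cyc.mp h).1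
    exact pathWeight_split σ p q h0

lemma fiber_false (p q : ℝ) (l m r₁ k i : ℕ) (hl : 1 ≤ l) (hk : 1 ≤ k) :
    ∑ σ ∈ (setA (l+m) r₁ k i).filter (fun σ => fz σ = 2*l ∧ walk σ 1 = -1), pathWeight p q σ
    = (q * (1/2:ℝ)^(2*l - 1) * (Ecnt l)) *
        ∑ ρ ∈ setA m r₁ (k-1) i, pathWeight p q ρ := by
  have hmem : ∀ σ : Fin (2*(l+m)) → Bool,
      (σ ∈ (setA (l+m) r₁ k i).filter (fun σ => fz σ = 2*l ∧ walk σ 1 = -1)) ↔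
      (sp1 σ ∈ cyc l false ∧ sp2 σ ∈ setA m r₁ (k-1) i) := by
    intro σ
    rw [Finset.mem_filter, mem_setA, mem_setA, mem_cyc]
    constructor
    · rintro ⟨⟨hend, hz, hp, hn⟩, hfz, h1⟩
      have h0 : walk σ (2*l) = 0 := by
        have := (fz_spec (show 1 ≤ 2*(l+m) by omega) hend).2
        rwa [hfz] at this
      have hno : ∀ j, 1 ≤ j → j < 2*l → walk σ j ≠ 0 := by
        intro j hj1 hj2
        exact fz_min j hj1 (by omega)
      have hc1 : IsCyc false (sp1 σ) := by
        refine ⟨by rw [walk_sp1 σ le_rfl]; exact h0, ?_, ?_⟩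
        · intro j hj
          simp only [Finset.mem_Ico] at hj
          rw [walk_sp1 σ (by omega)]
          exact hno j hj.1 hj.2
        · rw [walk_sp1 σ (by omega)]; simpa using h1
      have hc1' : sp1 σ ∈ cyc l false := mem_cyc.mpr hc1
      have hz1 : numZeros (sp1 σ) = 1 := numZeros_cyc hc1'
      have hp1 : numPosCycles (sp1 σ) = 0 := by simpa using numPos_cyc hc1'
      have hn1 : numNonnegSteps (sp1 σ) = 0 := by simpa using numNonneg_cyc hc1'
      have hzs := numZeros_split σ h0
      have hps := numPos_split σ h0
      have hns := numNonneg_split σ h0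
      refine ⟨hc1, ?_, ?_, ?_, ?_⟩
      · rw [← walk_end_split σ h0]; exact hend
      · omega
      · omega
      · omega
    · rintro ⟨hc1, hend2, hz2, hp2, hn2⟩
      have hc1' : sp1 σ ∈ cyc l false := mem_cyc.mpr hc1
      have h0 : walk σ (2*l) = 0 := by rw [← walk_sp1 σ le_rfl]; exact hc1.1
      have hno : ∀ j, 1 ≤ j → j < 2*l → walk σ j ≠ 0 := by
        intro j hj1 hj2
        rw [← walk_sp1 σ (by omega)]
        exact hc1.2.1 j (Finset.mem_Ico.mpr ⟨hj1, hj2⟩)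
      have hz1 : numZeros (sp1 σ) = 1 := numZeros_cyc hc1'
      have hp1 : numPosCycles (sp1 σ) = 0 := by simpa using numPos_cyc hc1'
      have hn1 : numNonnegSteps (sp1 σ) = 0 := by simpa using numNonneg_cyc hc1'
      have hzs := numZeros_split σ h0
      have hps := numPos_split σ h0
      have hns := numNonneg_split σ h0
      refine ⟨⟨by rw [walk_end_split σ h0]; exact hend2, by omega, by omega, by omega⟩,
        fz_eq (by omega) h0 hno, ?_⟩
      have := hc1.2.2
      rw [walk_sp1 σ (by omega)] at this
      simpa using this
  rw [Finset.sum_bij' (i := fun σ _ => (sp1 σ, sp2 σ)) (j := fun x _ => app2 x.1 x.2)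
    (hi := ?_) (hj := ?_) (left_neg := ?_) (right_neg := ?_) (h := ?_)
    (t := (cyc l false) ×ˢ (setA m r₁ (k-1) i))
    (g := fun x => pathWeight p q x.1 * pathWeight p q x.2)]
  · rw [Finset.sum_product]
    rw [← Finset.sum_mul_sum]
    rw [sum_cyc_false p q l]
  · intro σ hσ
    rw [Finset.mem_product]
    exact (hmem σ).mp hσ
  · intro x hx
    rw [Finset.mem_product] at hx
    apply (hmem _).mpr
    rw [sp1_app2, sp2_app2]
    exact hx
  · intro σ _; exact app2_sp σ
  · intro x _; simp [sp1_app2, sp2_app2]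
  · intro σ hσ
    have h := ((hmem σ).mp hσ).1
    have h0 : walk σ (2*l) = 0 := by
      rw [← walk_sp1 σ le_rfl]; exact (mem_cyc.mp h).1
    exact pathWeight_split σ p q h0

/-! empty fibers and helpers -/

lemma fiber_true_empty_i0 (l m r₁ k : ℕ) (hl : 1 ≤ l) :
    (setA (l+m) r₁ k 0).filter (fun σ => fz σ = 2*l ∧ walk σ 1 = 1) = ∅ := by
  rw [Finset.filter_eq_empty_iff]
  rintro σ hσ ⟨hfz, h1⟩
  have hp := (mem_setA.mp hσ).2.2.1
  have hmem0 : (0:ℕ) ∈ (Finset.range (2*(l+m))).filter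
      (fun j => walk σ j = 0 ∧ walk σ (j+1) = 1) := by
    simp only [Finset.mem_filter, Finset.mem_range]
    exact ⟨by omega, walk_zero σ, by simpa using h1⟩
  have := Finset.card_pos.mpr ⟨0, hmem0⟩
  unfold numPosCycles at hp
  omega

lemma fiber_true_empty_lr (l m r₁ k i : ℕ) (hl : 1 ≤ l) (hrl : r₁ < l) :
    (setA (l+m) r₁ k i).filter (fun σ => fz σ = 2*l ∧ walk σ 1 = 1) = ∅ := by
  rw [Finset.filter_eq_empty_iff]
  rintro σ hσ ⟨hfz, h1⟩
  rw [mem_setA] at hσ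
  obtain ⟨hend, hz, hp, hn⟩ := hσ
  have h0 : walk σ (2*l) = 0 := by
    have := (fz_spec (show 1 ≤ 2*(l+m) by omega) hend).2
    rwa [hfz] at this
  have hpos : ∀ j, 1 ≤ j → j < 2*l → 1 ≤ walk σ j :=
    pos_persist σ h1 (show 2*l ≤ 2*(l+m) by omega) (fun j a b => fz_min j a (by omega))
  have hsub : Finset.range (2*l) ⊆ (Finset.range (2*(l+m))).filter
      (fun j => 0 ≤ walk σ j ∧ 0 ≤ walk σ (j+1)) := by
    intro j hj
    simp only [Finset.mem_range] at hj
    simp only [Finset.mem_filter, Finset.mem_range]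
    refine ⟨by omega, ?_, ?_⟩
    · rcases Nat.eq_zero_or_pos j with rfl | hj1
      · rw [walk_zero]
      · exact le_trans (by omega) (hpos j hj1 hj)
    · rcases Nat.lt_or_ge (j+1) (2*l) with h | h
      · exact le_trans (by omega) (hpos (j+1) (by omega) h)
      · have hj2 : j+1 = 2*l := by omega
        rw [hj2, h0]
  have hcard := Finset.card_le_card hsub
  rw [Finset.card_range] at hcard
  unfold numNonnegSteps at hn
  omega

lemma setA_empty_of_lt {r r₁ : ℕ} (k i : ℕ) (h : r < r₁) : setA r r₁ k i = ∅ := by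
  rw [Finset.eq_empty_iff_forall_notMem]
  intro σ hσ
  have hn := (mem_setA.mp hσ).2.2.2
  have : numNonnegSteps σ ≤ 2*r := by
    unfold numNonnegSteps
    exact le_trans (Finset.card_filter_le _ _) (le_of_eq (Finset.card_range _))
  omega

lemma filter_g_true (r r₁ k i l : ℕ) (hr : 1 ≤ r) :
    (setA r r₁ k i).filter
      (fun σ => (fz σ / 2, decide (walk σ 1 = 1)) = (l, true))
    = (setA r r₁ k i).filter (fun σ => fz σ = 2*l ∧ walk σ 1 = 1) := by
  apply Finset.filter_congr
  intro σ hσ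
  rw [mem_setA] at hσ
  have hend := hσ.1
  have heven := fz_even (show 1 ≤ 2*r by omega) hend le_rfl
  have hsgn : walk σ 1 = 1 ∨ walk σ 1 = -1 := by
    rw [walk_one]; exact stp_cases σ (by omega)
  rw [Prod.mk.injEq]
  constructor
  · rintro ⟨h1, h2⟩
    simp only [decide_eq_true_eq] at h2
    exact ⟨by omega, h2⟩
  · rintro ⟨h1, h2⟩
    exact ⟨by omega, by simp [h2]⟩

lemma filter_g_false (r r₁ k i l : ℕ) (hr : 1 ≤ r) :
    (setA r r₁ k i).filter
      (fun σ => (fz σ / 2, decide (walk σ 1 = 1)) = (l, false))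
    = (setA r r₁ k i).filter (fun σ => fz σ = 2*l ∧ walk σ 1 = -1) := by
  apply Finset.filter_congr
  intro σ hσ
  rw [mem_setA] at hσ
  have hend := hσ.1
  have heven := fz_even (show 1 ≤ 2*r by omega) hend le_rfl
  have hsgn : walk σ 1 = 1 ∨ walk σ 1 = -1 := by
    rw [walk_one]; exact stp_cases σ (by omega)
  rw [Prod.mk.injEq]
  constructor
  · rintro ⟨h1, h2⟩
    simp only [decide_eq_false_iff_not] at h2
    refine ⟨by omega, ?_⟩
    rcases hsgn with h | h
    · exact absurd h h2
    · exact h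
  · rintro ⟨h1, h2⟩
    refine ⟨by omega, by simp [h2]⟩

/-! the recursively defined weight `EE` -/

noncomputable def EE : ℕ → ℕ → ℝ
  | d, 0 => if d = 0 then 1 else 0
  | d, (m+1) => ∑ l ∈ Finset.Icc 1 d, ((Ecnt l : ℝ) * (1/2:ℝ)^(2*l - 1)) * EE (d - l) m

lemma EE_zero (d : ℕ) : EE d 0 = if d = 0 then 1 else 0 := rfl

lemma EE_succ (d m : ℕ) :
    EE d (m+1) = ∑ l ∈ Finset.Icc 1 d, ((Ecnt l : ℝ) * (1/2:ℝ)^(2*l - 1)) * EE (d - l) m := rfl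

/-! the two fiber totals, with IH plugged in -/

lemma Ptot (p q : ℝ) (K r₁ r₂ i : ℕ)
    (IH : ∀ r₁' r₂' i', ∑ σ ∈ setA (r₁'+r₂') r₁' K i', pathWeight p q σ
      = (Nat.choose K i' : ℝ) * p^i' * q^(K-i') * EE r₁' i' * EE r₂' (K-i'))
    (l : ℕ) (hl : 1 ≤ l) (hlr : l ≤ r₁ + r₂) :
    ∑ σ ∈ (setA (r₁+r₂) r₁ (K+1) i).filter (fun σ => fz σ = 2*l ∧ walk σ 1 = 1),
        pathWeight p q σ
    = if 1 ≤ i ∧ l ≤ r₁ then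
        (p * (1/2:ℝ)^(2*l-1) * (Ecnt l)) *
          ((Nat.choose K (i-1) : ℝ) * p^(i-1) * q^(K-(i-1)) * EE (r₁-l) (i-1) * EE r₂ (K-(i-1)))
      else 0 := by
  have hm : r₁ + r₂ = l + (r₁ + r₂ - l) := by omega
  by_cases hcase : 1 ≤ i ∧ l ≤ r₁
  · rw [if_pos hcase, hm,
      fiber_true p q l (r₁ + r₂ - l) r₁ (K+1) i hl (by omega) hcase.1 hcase.2,
      show K + 1 - 1 = K from rfl,
      show r₁ + r₂ - l = (r₁ - l) + r₂ by omega,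
      IH (r₁ - l) r₂ (i-1)]
  · rw [if_neg hcase]
    rcases Nat.eq_zero_or_pos i with rfl | hi1
    · rw [hm, fiber_true_empty_i0 l (r₁ + r₂ - l) r₁ (K+1) hl, Finset.sum_empty]
    · rw [hm, fiber_true_empty_lr l (r₁ + r₂ - l) r₁ (K+1) i hl (by omega), Finset.sum_empty]

lemma Qtot (p q : ℝ) (K r₁ r₂ i : ℕ)
    (IH : ∀ r₁' r₂' i', ∑ σ ∈ setA (r₁'+r₂') r₁' K i', pathWeight p q σ
      = (Nat.choose K i' : ℝ) * p^i' * q^(K-i') * EE r₁' i' * EE r₂' (K-i'))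
    (l : ℕ) (hl : 1 ≤ l) (hlr : l ≤ r₁ + r₂) :
    ∑ σ ∈ (setA (r₁+r₂) r₁ (K+1) i).filter (fun σ => fz σ = 2*l ∧ walk σ 1 = -1),
        pathWeight p q σ
    = if l ≤ r₂ then
        (q * (1/2:ℝ)^(2*l-1) * (Ecnt l)) *
          ((Nat.choose K i : ℝ) * p^i * q^(K-i) * EE r₁ i * EE (r₂-l) (K-i))
      else 0 := by
  have hm : r₁ + r₂ = l + (r₁ + r₂ - l) := by omega
  rw [hm, fiber_false p q l (r₁ + r₂ - l) r₁ (K+1) i hl (by omega),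
    show K + 1 - 1 = K from rfl]
  by_cases hc : l ≤ r₂
  · rw [if_pos hc, show r₁ + r₂ - l = r₁ + (r₂ - l) by omega, IH r₁ (r₂ - l) i]
  · rw [if_neg hc, setA_empty_of_lt K i (show r₁ + r₂ - l < r₁ by omega),
      Finset.sum_empty, mul_zero]

/-! the main induction -/

lemma main_sum (p q : ℝ) : ∀ (k r r₁ r₂ i : ℕ), r = r₁ + r₂ →
    ∑ σ ∈ setA r r₁ k i, pathWeight p q σ
      = (Nat.choose k i : ℝ) * p^i * q^(k-i) * EE r₁ i * EE r₂ (k-i) := by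
  intro k
  induction k with
  | zero =>
    intro r r₁ r₂ i hr
    subst hr
    rcases Nat.eq_zero_or_pos (r₁+r₂) with h0 | hrpos
    · have h1 : r₁ = 0 := by omega
      have h2 : r₂ = 0 := by omega
      subst h1; subst h2
      rcases Nat.eq_zero_or_pos i with rfl | hi
      · have huniv : setA (0+0) 0 0 0 = Finset.univ := by
          ext σ
          rw [mem_setA]
          simp only [Finset.mem_univ, iff_true]
          refine ⟨walk_zero σ, ?_, ?_, ?_⟩
          · unfold numZeros
            rw [show Finset.Icc 1 (2*(0+0)) = ∅ from Finset.Icc_eq_empty (by norm_num)]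
            simp
          · unfold numPosCycles
            rw [show Finset.range (2*(0+0)) = ∅ from by norm_num]
            simp
          · unfold numNonnegSteps
            rw [show Finset.range (2*(0+0)) = ∅ from by norm_num]
            simp
        rw [huniv]
        have hpw : ∀ σ : Fin (2*(0+0)) → Bool, pathWeight p q σ = 1 := by
          intro σ
          unfold pathWeight
          rw [show Finset.range (2*(0+0)) = ∅ from by norm_num]
          simp
        rw [Finset.sum_congr rfl (fun σ _ => hpw σ), Finset.sum_const, nsmul_eq_mul,
          Finset.card_univ]
        have : Fintype.card (Fin (2*(0+0)) → Bool) = 1 := by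
          rw [Fintype.card_fun]
          norm_num
        rw [this]
        rw [EE_zero]
        norm_num
      · have hempty : setA (0+0) 0 0 i = ∅ := by
          rw [Finset.eq_empty_iff_forall_notMem]
          intro σ hσ
          have hp := (mem_setA.mp hσ).2.2.1
          unfold numPosCycles at hp
          rw [show Finset.range (2*(0+0)) = ∅ from by norm_num] at hp
          simp at hp
          omega
        rw [hempty, Finset.sum_empty, Nat.choose_eq_zero_of_lt (by omega)]
        norm_num
    · have hempty : setA (r₁+r₂) r₁ 0 i = ∅ := by
        rw [Finset.eq_empty_iff_forall_notMem]
        intro σ hσ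
        rw [mem_setA] at hσ
        obtain ⟨hend, hz, -, -⟩ := hσ
        have hmem : (2*(r₁+r₂)) ∈ (Finset.Icc 1 (2*(r₁+r₂))).filter (fun j => walk σ j = 0) := by
          simp only [Finset.mem_filter, Finset.mem_Icc]
          exact ⟨⟨by omega, le_rfl⟩, hend⟩
        have := Finset.card_pos.mpr ⟨_, hmem⟩
        unfold numZeros at hz
        omega
      rw [hempty, Finset.sum_empty]
      rcases Nat.eq_zero_or_pos i with rfl | hi
      · rcases Nat.eq_zero_or_pos r₁ with rfl | h1
        · have : EE r₂ 0 = 0 := by rw [EE_zero, if_neg (by omega)]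
          rw [this]; ring
        · have : EE r₁ 0 = 0 := by rw [EE_zero, if_neg (by omega)]
          rw [this]; ring
      · rw [Nat.choose_eq_zero_of_lt (by omega)]
        norm_num
  | succ K IH =>
    intro r r₁ r₂ i hr
    subst hr
    have IH' : ∀ r₁' r₂' i', ∑ σ ∈ setA (r₁'+r₂') r₁' K i', pathWeight p q σ
        = (Nat.choose K i' : ℝ) * p^i' * q^(K-i') * EE r₁' i' * EE r₂' (K-i') :=
      fun a b c => IH (a+b) a b c rfl
    rcases Nat.eq_zero_or_pos (r₁+r₂) with h0 | hrpos
    · have hempty : setA (r₁+r₂) r₁ (K+1) i = ∅ := by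
        rw [Finset.eq_empty_iff_forall_notMem]
        intro σ hσ
        have hz := (mem_setA.mp hσ).2.1
        have hle : numZeros σ ≤ 2*(r₁+r₂) := by
          unfold numZeros
          refine le_trans (Finset.card_filter_le _ _) ?_
          rw [Nat.card_Icc]
          omega
        have h00 : (2*(r₁+r₂) : ℕ) = 0 := by omega
        omega
      rw [hempty, Finset.sum_empty]
      have h1 : r₁ = 0 := by omega
      have h2 : r₂ = 0 := by omega
      subst h1; subst h2
      rcases Nat.eq_zero_or_pos i with rfl | hi
      · have : EE 0 (K+1-0) = 0 := by
          rw [show K+1-0 = K+1 from rfl, EE_succ]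
          rw [show Finset.Icc 1 0 = ∅ from Finset.Icc_eq_empty (by omega)]
          simp
        rw [this]; ring
      · have : EE 0 i = 0 := by
          obtain ⟨i', rfl⟩ : ∃ i', i = i'+1 := ⟨i-1, by omega⟩
          rw [EE_succ]
          rw [show Finset.Icc 1 0 = ∅ from Finset.Icc_eq_empty (by omega)]
          simp
        rw [this]; ring
    · have hmaps : ∀ σ ∈ setA (r₁+r₂) r₁ (K+1) i,
          ((fz σ / 2, decide (walk σ 1 = 1)) : ℕ × Bool) ∈
            (Finset.Icc 1 (r₁+r₂)) ×ˢ (Finset.univ : Finset Bool) := by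
        intro σ hσ
        rw [mem_setA] at hσ
        have hend := hσ.1
        have hsp := fz_spec (show 1 ≤ 2*(r₁+r₂) by omega) hend
        have hle := fz_le (show 1 ≤ 2*(r₁+r₂) by omega) hend
        have hev := fz_even (show 1 ≤ 2*(r₁+r₂) by omega) hend le_rfl
        rw [Finset.mem_product, Finset.mem_Icc]
        exact ⟨⟨by omega, by omega⟩, Finset.mem_univ _⟩
      rw [← Finset.sum_fiberwise_of_maps_to hmaps (pathWeight p q), Finset.sum_product]
      have hstep : ∀ l ∈ Finset.Icc 1 (r₁+r₂),
          (∑ b ∈ (Finset.univ : Finset Bool), ∑ σ ∈ (setA (r₁+r₂) r₁ (K+1) i).filter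
            (fun σ => (fz σ / 2, decide (walk σ 1 = 1)) = (l, b)), pathWeight p q σ)
          = (if 1 ≤ i ∧ l ≤ r₁ then
              (p * (1/2:ℝ)^(2*l-1) * (Ecnt l)) *
                ((Nat.choose K (i-1) : ℝ) * p^(i-1) * q^(K-(i-1)) * EE (r₁-l) (i-1) *
                  EE r₂ (K-(i-1)))
            else 0)
            + (if l ≤ r₂ then
              (q * (1/2:ℝ)^(2*l-1) * (Ecnt l)) *
                ((Nat.choose K i : ℝ) * p^i * q^(K-i) * EE r₁ i * EE (r₂-l) (K-i))
            else 0) := by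
        intro l hl
        rw [Finset.mem_Icc] at hl
        rw [Fintype.sum_bool,
          filter_g_true (r₁+r₂) r₁ (K+1) i l (by omega),
          filter_g_false (r₁+r₂) r₁ (K+1) i l (by omega),
          Ptot p q K r₁ r₂ i IH' l hl.1 hl.2,
          Qtot p q K r₁ r₂ i IH' l hl.1 hl.2]
      rw [Finset.sum_congr rfl hstep, Finset.sum_add_distrib]
      rcases Nat.eq_zero_or_pos i with rfl | hipos
      · have hP0 : (∑ l ∈ Finset.Icc 1 (r₁+r₂), if 1 ≤ 0 ∧ l ≤ r₁ then
              (p * (1/2:ℝ)^(2*l-1) * (Ecnt l)) *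
                ((Nat.choose K (0-1) : ℝ) * p^(0-1) * q^(K-(0-1)) * EE (r₁-l) (0-1) *
                  EE r₂ (K-(0-1)))
            else 0) = 0 :=
          Finset.sum_eq_zero (fun l _ => if_neg (by omega))
        rw [hP0, zero_add, ← Finset.sum_filter]
        have hIcc : (Finset.Icc 1 (r₁+r₂)).filter (fun l => l ≤ r₂) = Finset.Icc 1 r₂ := by
          ext l
          simp only [Finset.mem_filter, Finset.mem_Icc]
          omega
        rw [hIcc, show (K+1-0 : ℕ) = K + 1 from rfl, EE_succ r₂ K, Finset.mul_sum]
        apply Finset.sum_congr rfl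
        intro l hl
        simp only [Nat.choose_zero_right, Nat.cast_one, pow_zero, Nat.sub_zero]
        rw [pow_succ q K]
        ring
      · obtain ⟨i', rfl⟩ : ∃ i', i = i'+1 := ⟨i-1, by omega⟩
        have hPsum : (∑ l ∈ Finset.Icc 1 (r₁+r₂), if 1 ≤ i'+1 ∧ l ≤ r₁ then
              (p * (1/2:ℝ)^(2*l-1) * (Ecnt l)) *
                ((Nat.choose K (i'+1-1) : ℝ) * p^(i'+1-1) * q^(K-(i'+1-1)) * EE (r₁-l) (i'+1-1) *
                  EE r₂ (K-(i'+1-1)))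
            else 0)
            = ((Nat.choose K i' : ℝ) * p^(i'+1) * q^(K-i') * EE r₂ (K-i')) * EE r₁ (i'+1) := by
          rw [← Finset.sum_filter]
          have hIccP : (Finset.Icc 1 (r₁+r₂)).filter (fun l => 1 ≤ i'+1 ∧ l ≤ r₁)
              = Finset.Icc 1 r₁ := by
            ext l
            simp only [Finset.mem_filter, Finset.mem_Icc]
            omega
          rw [hIccP, EE_succ r₁ i', Finset.mul_sum]
          apply Finset.sum_congr rfl
          intro l hl
          simp only [Nat.add_sub_cancel]
          rw [pow_succ p i']
          ring
        have hQsum : (∑ l ∈ Finset.Icc 1 (r₁+r₂), if l ≤ r₂ then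
              (q * (1/2:ℝ)^(2*l-1) * (Ecnt l)) *
                ((Nat.choose K (i'+1) : ℝ) * p^(i'+1) * q^(K-(i'+1)) * EE r₁ (i'+1) *
                  EE (r₂-l) (K-(i'+1)))
            else 0)
            = ((Nat.choose K (i'+1) : ℝ) * p^(i'+1) * q^(K-i') * EE r₁ (i'+1)) *
                EE r₂ (K-i') := by
          by_cases hiK : i'+1 ≤ K
          · rw [← Finset.sum_filter]
            have hIccQ : (Finset.Icc 1 (r₁+r₂)).filter (fun l => l ≤ r₂)
                = Finset.Icc 1 r₂ := by
              ext l
              simp only [Finset.mem_filter, Finset.mem_Icc]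
              omega
            rw [hIccQ, show K - i' = (K - (i'+1)) + 1 by omega, EE_succ r₂ (K-(i'+1)),
              Finset.mul_sum]
            apply Finset.sum_congr rfl
            intro l hl
            rw [pow_succ q (K-(i'+1))]
            ring
          · have hc0 : K.choose (i'+1) = 0 := Nat.choose_eq_zero_of_lt (by omega)
            rw [hc0]
            push_cast
            rw [show ((0:ℝ) * p^(i'+1) * q^(K-i') * EE r₁ (i'+1)) * EE r₂ (K-i') = 0 by ring]
            apply Finset.sum_eq_zero
            intro l _
            split_ifs
            · ring
            · rfl
        rw [hPsum, hQsum, show (K+1) - (i'+1) = K - i' by omega,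
          Nat.choose_succ_succ K i']
        push_cast
        ring

/-! nonnegative return paths and Catalan numbers -/

def IsNN {n : ℕ} (ρ : Fin (2*n) → Bool) : Prop :=
  walk ρ (2*n) = 0 ∧ ∀ j ∈ Finset.range (2*n), 0 ≤ walk ρ j

instance {n : ℕ} : DecidablePred (IsNN (n := n)) := fun ρ => by
  unfold IsNN; infer_instance

def nng (n : ℕ) : Finset (Fin (2*n) → Bool) :=
  Finset.univ.filter IsNN

lemma mem_nng {n : ℕ} {ρ : Fin (2*n) → Bool} :
    ρ ∈ nng n ↔ walk ρ (2*n) = 0 ∧ ∀ j ∈ Finset.range (2*n), 0 ≤ walk ρ j := by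
  unfold nng
  rw [Finset.mem_filter]
  unfold IsNN
  simp only [Finset.mem_univ, true_and]

lemma nng_zero_card : (nng 0).card = 1 := by
  have : nng 0 = Finset.univ := by
    ext ρ
    rw [mem_nng]
    simp only [Finset.mem_univ, iff_true]
    exact ⟨walk_zero ρ, by intro j hj; rw [show Finset.range (2*0) = ∅ from by norm_num] at hj; exact absurd hj (Finset.notMem_empty j)⟩
  rw [this, Finset.card_univ, Fintype.card_fun]
  norm_num

lemma nng_card_rec (l m n : ℕ) (h : n = l + m) (hl : 1 ≤ l) :
    ((nng n).filter (fun σ => fz σ = 2*l)).card = Ecnt l * (nng m).card := by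
  subst h
  have hmem : ∀ σ : Fin (2*(l+m)) → Bool,
      (σ ∈ (nng (l+m)).filter (fun σ => fz σ = 2*l)) ↔
      (sp1 σ ∈ cyc l true ∧ sp2 σ ∈ nng m) := by
    intro σ
    rw [Finset.mem_filter, mem_nng, mem_nng, mem_cyc]
    constructor
    · rintro ⟨⟨hend, hnn⟩, hfz⟩
      have h0 : walk σ (2*l) = 0 := by
        have := (fz_spec (show 1 ≤ 2*(l+m) by omega) hend).2
        rwa [hfz] at this
      have hno : ∀ j, 1 ≤ j → j < 2*l → walk σ j ≠ 0 := fun j a b => fz_min j a (by omega)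
      have h1 : walk σ 1 = 1 := by
        have hs : walk σ 1 = 1 ∨ walk σ 1 = -1 := by
          rw [walk_one]; exact stp_cases σ (by omega)
        have hge := hnn 1 (Finset.mem_range.mpr (by omega))
        rcases hs with h | h
        · exact h
        · omega
      refine ⟨⟨by rw [walk_sp1 σ le_rfl]; exact h0, ?_, by rw [walk_sp1 σ (by omega)]; simpa using h1⟩, ?_, ?_⟩
      · intro j hj
        simp only [Finset.mem_Ico] at hj
        rw [walk_sp1 σ (by omega)]
        exact hno j hj.1 hj.2
      · rw [← walk_end_split σ h0]; exact hend
      · intro t ht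
        simp only [Finset.mem_range] at ht
        rw [walk_sp2 σ h0 t]
        exact hnn (2*l + t) (Finset.mem_range.mpr (by omega))
    · rintro ⟨hc1, hend2, hnn2⟩
      have hc1' : sp1 σ ∈ cyc l true := mem_cyc.mpr hc1
      have h0 : walk σ (2*l) = 0 := by rw [← walk_sp1 σ le_rfl]; exact hc1.1
      have hpos := cyc_walk_pos hc1'
      refine ⟨⟨by rw [walk_end_split σ h0]; exact hend2, ?_⟩, ?_⟩
      · intro j hj
        simp only [Finset.mem_range] at hj
        rcases Nat.lt_or_ge j (2*l) with h | h
        · rcases Nat.eq_zero_or_pos j with rfl | hj1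
          · rw [walk_zero]
          · rw [← walk_sp1 σ (by omega)]
            exact le_trans (by omega) (hpos j hj1 h)
        · have : j = 2*l + (j - 2*l) := by omega
          rw [this, ← walk_sp2 σ h0]
          exact hnn2 (j - 2*l) (Finset.mem_range.mpr (by omega))
      · refine fz_eq (by omega) h0 ?_
        intro j hj1 hj2
        rw [← walk_sp1 σ (by omega)]
        exact hc1.2.1 j (Finset.mem_Ico.mpr ⟨hj1, hj2⟩)
  rw [show Ecnt l = (cyc l true).card from rfl, ← Finset.card_product]
  apply Finset.card_bij' (fun σ _ => (sp1 σ, sp2 σ)) (fun x _ => app2 x.1 x.2)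
  · intro σ hσ
    rw [Finset.mem_product]
    exact (hmem σ).mp hσ
  · intro x hx
    rw [Finset.mem_product] at hx
    apply (hmem _).mpr
    rw [sp1_app2, sp2_app2]
    exact hx
  · intro σ _; exact app2_sp σ
  · intro x _; simp [sp1_app2, sp2_app2]

lemma nng_succ_card (n : ℕ) (hn : 1 ≤ n) :
    (nng n).card = ∑ l ∈ Finset.Icc 1 n, Ecnt l * (nng (n - l)).card := by
  have hmaps : ∀ σ ∈ nng n, fz σ / 2 ∈ Finset.Icc 1 n := by
    intro σ hσ
    rw [mem_nng] at hσ
    have hend := hσ.1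
    have hsp := fz_spec (show 1 ≤ 2*n by omega) hend
    have hle := fz_le (show 1 ≤ 2*n by omega) hend
    have hev := fz_even (show 1 ≤ 2*n by omega) hend le_rfl
    rw [Finset.mem_Icc]
    omega
  rw [Finset.card_eq_sum_ones, ← Finset.sum_fiberwise_of_maps_to hmaps (fun _ => 1)]
  apply Finset.sum_congr rfl
  intro l hl
  rw [Finset.mem_Icc] at hl
  have heq : (nng n).filter (fun σ => fz σ / 2 = l) = (nng n).filter (fun σ => fz σ = 2*l) := by
    apply Finset.filter_congr
    intro σ hσ
    rw [mem_nng] at hσ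
    have hend := hσ.1
    have hev := fz_even (show 1 ≤ 2*n by omega) hend le_rfl
    constructor <;> intro h <;> omega
  rw [heq, ← Finset.card_eq_sum_ones, nng_card_rec l (n-l) n (by omega) hl.1]

/-! removing the outer up/down steps of a positive cycle -/

def midp {n : ℕ} (τ : Fin (2*(n+1)) → Bool) : Fin (2*n) → Bool :=
  fun j => τ ⟨(j:ℕ)+1, by have := j.isLt; omega⟩

def extp {n : ℕ} (ρ : Fin (2*n) → Bool) : Fin (2*(n+1)) → Bool :=
  fun i => if h0 : (i:ℕ) = 0 then true
    else if h : (i:ℕ) ≤ 2*n then ρ ⟨(i:ℕ)-1, by omega⟩ else false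

lemma stp_midp {n : ℕ} (τ : Fin (2*(n+1)) → Bool) {j : ℕ} (hj : j < 2*n) :
    stp (midp τ) j = stp τ (j+1) := by
  unfold stp midp
  rw [dif_pos hj, dif_pos (by omega)]

lemma walk_midp {n : ℕ} (τ : Fin (2*(n+1)) → Bool) {t : ℕ} (ht : t ≤ 2*n) :
    walk (midp τ) t = walk τ (t+1) - walk τ 1 := by
  have h1 : walk τ (t+1) = (∑ i ∈ Finset.range t, stp τ (i+1)) + stp τ 0 := by
    rw [walk_eq_sum_range]
    exact Finset.sum_range_succ' _ t
  rw [walk_eq_sum_range,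
    Finset.sum_congr rfl (fun i hi => stp_midp τ (by simp only [Finset.mem_range] at hi; omega)),
    h1, walk_one]
  ring

lemma stp_extp_zero {n : ℕ} (ρ : Fin (2*n) → Bool) : stp (extp ρ) 0 = 1 := by
  have h : (0:ℕ) < 2*(n+1) := by omega
  unfold stp
  rw [dif_pos h]
  have hv : extp ρ ⟨0, h⟩ = true := rfl
  rw [hv]
  rfl

lemma stp_extp_mid {n : ℕ} (ρ : Fin (2*n) → Bool) {i : ℕ} (h1 : 1 ≤ i) (h2 : i ≤ 2*n) :
    stp (extp ρ) i = stp ρ (i-1) := by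
  have hlt : i < 2*(n+1) := by omega
  have hlt2 : i - 1 < 2*n := by omega
  unfold stp
  rw [dif_pos hlt, dif_pos hlt2]
  have hv : extp ρ ⟨i, hlt⟩ = ρ ⟨i-1, hlt2⟩ := by
    unfold extp
    have hc1 : ¬ (((⟨i, hlt⟩ : Fin (2*(n+1))) : ℕ) = 0) := by simp; omega
    rw [dif_neg hc1]
    have hc2 : ((⟨i, hlt⟩ : Fin (2*(n+1))) : ℕ) ≤ 2*n := h2
    rw [dif_pos hc2]
  rw [hv]

lemma stp_extp_last {n : ℕ} (ρ : Fin (2*n) → Bool) : stp (extp ρ) (2*n+1) = -1 := by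
  have hlt : 2*n+1 < 2*(n+1) := by omega
  unfold stp
  rw [dif_pos hlt]
  have hv : extp ρ ⟨2*n+1, hlt⟩ = false := by
    unfold extp
    have hc1 : ¬ (((⟨2*n+1, hlt⟩ : Fin (2*(n+1))) : ℕ) = 0) := by simp
    rw [dif_neg hc1]
    have hc2 : ¬ (((⟨2*n+1, hlt⟩ : Fin (2*(n+1))) : ℕ) ≤ 2*n) := by simp
    rw [dif_neg hc2]
  rw [hv]
  rfl

lemma walk_extp {n : ℕ} (ρ : Fin (2*n) → Bool) {t : ℕ} (ht : t ≤ 2*n) :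
    walk (extp ρ) (t+1) = 1 + walk ρ t := by
  have h1 : walk (extp ρ) (t+1) = (∑ i ∈ Finset.range t, stp (extp ρ) (i+1)) + stp (extp ρ) 0 := by
    rw [walk_eq_sum_range]
    exact Finset.sum_range_succ' _ t
  rw [h1, stp_extp_zero]
  have h2 : ∀ i ∈ Finset.range t, stp (extp ρ) (i+1) = stp ρ i := by
    intro i hi
    simp only [Finset.mem_range] at hi
    rw [stp_extp_mid ρ (by omega) (by omega)]
    simp
  rw [Finset.sum_congr rfl h2, ← walk_eq_sum_range]
  ring

lemma walk_extp_end {n : ℕ} (ρ : Fin (2*n) → Bool) :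
    walk (extp ρ) (2*(n+1)) = walk ρ (2*n) := by
  have h1 : walk (extp ρ) (2*(n+1)) = walk (extp ρ) ((2*n+1)+1) := congrArg _ (by ring)
  rw [h1, walk_succ, stp_extp_last, walk_extp ρ le_rfl]
  ring

lemma Ecnt_succ (n : ℕ) : Ecnt (n+1) = (nng n).card := by
  unfold Ecnt
  apply Finset.card_bij' (fun τ _ => midp τ) (fun ρ _ => extp ρ)
  · intro τ hτ
    have hτ' := hτ
    rw [mem_cyc] at hτ'
    obtain ⟨hend, hno, h1⟩ := hτ'
    have h1' : walk τ 1 = 1 := by simpa using h1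
    have hpos := cyc_walk_pos hτ
    have w21 : walk τ (2*n+1) = 1 := by
      have he : walk τ (2*(n+1)) = walk τ ((2*n+1)+1) := congrArg _ (by ring)
      have hs := walk_succ τ (2*n+1)
      have hd := stp_cases τ (show 2*n+1 < 2*(n+1) by omega)
      have hp := hpos (2*n+1) (by omega) (by omega)
      rw [he, hs] at hend
      rcases hd with h | h <;> omega
    rw [mem_nng]
    constructor
    · rw [walk_midp τ le_rfl, w21, h1']
      ring
    · intro j hj
      simp only [Finset.mem_range] at hj
      rw [walk_midp τ (by omega), h1']
      have := hpos (j+1) (by omega) (by omega)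
      omega
  · intro ρ hρ
    rw [mem_nng] at hρ
    obtain ⟨hend, hnn⟩ := hρ
    rw [mem_cyc]
    refine ⟨by rw [walk_extp_end, hend], ?_, ?_⟩
    · intro j hj
      simp only [Finset.mem_Ico] at hj
      obtain ⟨t, rfl⟩ : ∃ t, j = t+1 := ⟨j-1, by omega⟩
      rw [walk_extp ρ (by omega)]
      rcases Nat.lt_or_ge t (2*n) with h | h
      · have := hnn t (Finset.mem_range.mpr h)
        omega
      · have ht : t = 2*n := by omega
        rw [ht, hend]
        norm_num
    · rw [walk_extp ρ (by omega), walk_zero]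
      norm_num
  · -- midp then extp
    intro τ hτ
    have hτ' := hτ
    rw [mem_cyc] at hτ'
    obtain ⟨hend, hno, h1⟩ := hτ'
    have h1' : walk τ 1 = 1 := by simpa using h1
    have hpos := cyc_walk_pos hτ
    have w21 : walk τ (2*n+1) = 1 := by
      have he : walk τ (2*(n+1)) = walk τ ((2*n+1)+1) := congrArg _ (by ring)
      have hs := walk_succ τ (2*n+1)
      have hd := stp_cases τ (show 2*n+1 < 2*(n+1) by omega)
      have hp := hpos (2*n+1) (by omega) (by omega)
      rw [he, hs] at hend
      rcases hd with h | h <;> omega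
    funext i
    rcases Nat.eq_zero_or_pos (i:ℕ) with hi0 | hi1
    · have hfirst : τ ⟨0, by omega⟩ = true := by
        have hstp : stp τ 0 = 1 := by rw [← walk_one]; exact h1'
        unfold stp at hstp
        rw [dif_pos (by omega)] at hstp
        by_contra hcon
        simp only [Bool.not_eq_true] at hcon
        rw [hcon] at hstp
        norm_num at hstp
      unfold extp
      try dsimp only
      rw [dif_pos hi0]
      have hieq : i = ⟨0, by omega⟩ := Fin.ext (by simpa using hi0)
      rw [hieq]
      exact hfirst.symm
    · rcases Nat.lt_or_ge (i:ℕ) (2*n+1) with hmid | hlast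
      · unfold extp midp
        try dsimp only
        rw [dif_neg (by omega), dif_pos (by omega)]
        congr 1
        exact Fin.ext (by simp; omega)
      · have hieq : (i:ℕ) = 2*n+1 := by have := i.isLt; omega
        have hlaststp : stp τ (2*n+1) = -1 := by
          have he : walk τ (2*(n+1)) = walk τ ((2*n+1)+1) := congrArg _ (by ring)
          have hs := walk_succ τ (2*n+1)
          rw [he, hs, w21] at hend
          omega
        have hlastval : τ ⟨2*n+1, by omega⟩ = false := by
          unfold stp at hlaststp
          rw [dif_pos (by omega)] at hlaststp
          by_contra hcon
          simp only [Bool.not_eq_false] at hcon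
          rw [hcon] at hlaststp
          norm_num at hlaststp
        unfold extp
        try dsimp only
        rw [dif_neg (by omega), dif_neg (by omega)]
        have hieq : i = ⟨2*n+1, by omega⟩ := Fin.ext (by simpa using hieq)
        rw [hieq]
        exact hlastval.symm
  · -- extp then midp
    intro ρ _
    funext j
    unfold midp extp
    try dsimp only
    rw [dif_neg (by omega), dif_pos (by have := j.isLt; omega)]
    congr 1

lemma nng_card_catalan : ∀ n, (nng n).card = catalan n := by
  intro n
  induction n using Nat.strong_induction_on with
  | _ n IH =>
    rcases Nat.eq_zero_or_pos n with rfl | hn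
    · rw [nng_zero_card, catalan_zero]
    · obtain ⟨n', rfl⟩ : ∃ n', n = n'+1 := ⟨n-1, by omega⟩
      rw [nng_succ_card _ (by omega)]
      have h1 : ∀ l ∈ Finset.Icc 1 (n'+1),
          Ecnt l * (nng (n'+1-l)).card = catalan (l-1) * catalan (n'+1-l) := by
        intro l hl
        rw [Finset.mem_Icc] at hl
        obtain ⟨l', rfl⟩ : ∃ l', l = l'+1 := ⟨l-1, by omega⟩
        rw [Ecnt_succ l', IH l' (by omega), IH (n'+1-(l'+1)) (by omega)]
        simp
      rw [Finset.sum_congr rfl h1, catalan_succ]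
      rw [Fin.sum_univ_eq_sum_range (fun i => catalan i * catalan (n' - i)) (n'+1)]
      refine Finset.sum_bij' (fun l _ => l - 1) (fun j _ => j + 1) ?_ ?_ ?_ ?_ ?_
      · intro l hl
        simp only [Finset.mem_Icc] at hl
        simp only [Finset.mem_range]
        omega
      · intro j hj
        simp only [Finset.mem_range] at hj
        simp only [Finset.mem_Icc]
        omega
      · intro l hl
        simp only [Finset.mem_Icc] at hl
        omega
      · intro j _
        omega
      · intro l hl
        simp only [Finset.mem_Icc] at hl
        rw [show n' - (l-1) = n'+1-l by omega]

lemma Ecnt_catalan {l : ℕ} (hl : 1 ≤ l) : Ecnt l = catalan (l-1) := by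
  obtain ⟨l', rfl⟩ : ∃ l', l = l'+1 := ⟨l-1, by omega⟩
  rw [Ecnt_succ l', nng_card_catalan]
  simp

/-! ballot numbers and the Catalan convolution -/

noncomputable def Br (a b : ℕ) : ℝ :=
  (Nat.choose (a+b) b : ℝ) - (Nat.choose (a+b) (a+1) : ℝ)

lemma Br_zero (a : ℕ) : Br a 0 = 1 := by
  unfold Br
  rw [Nat.choose_eq_zero_of_lt (show a + 0 < a + 1 by omega)]
  simp

lemma Br_diag_zero (x : ℕ) : Br x (x+1) = 0 := by
  unfold Br
  exact sub_self _

lemma Br_pascal (a b : ℕ) : Br (a+1) (b+1) = Br a (b+1) + Br (a+1) b := by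
  unfold Br
  rw [show (a+1)+(b+1) = (a+b+1)+1 by ring, show a+(b+1) = a+b+1 by ring,
    show (a+1)+b = a+b+1 by ring, show a+1+1 = (a+1)+1 from rfl,
    Nat.choose_succ_succ (a+b+1) b, Nat.choose_succ_succ (a+b+1) (a+1)]
  push_cast
  ring

lemma Br_catalan (n : ℕ) : Br n n = (catalan n : ℝ) := by
  have h1 : Nat.choose (2*n) (n+1) * (n+1) = Nat.choose (2*n) n * n := by
    have := Nat.choose_succ_right_eq (2*n) n
    rwa [show 2*n - n = n by omega] at this
  have h2 : (n+1) * catalan n = Nat.choose (2*n) n := by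
    have := succ_mul_catalan_eq_centralBinom n
    rwa [Nat.centralBinom] at this
  have hne : ((n:ℝ)+1) ≠ 0 := by positivity
  apply mul_left_cancel₀ hne
  unfold Br
  rw [show n + n = 2*n by ring]
  have c1 : (Nat.choose (2*n) (n+1) : ℝ) * ((n:ℝ)+1) = (Nat.choose (2*n) n : ℝ) * n := by
    exact_mod_cast congrArg (Nat.cast (R := ℝ)) h1
  have c2 : ((n:ℝ)+1) * (catalan n : ℝ) = (Nat.choose (2*n) n : ℝ) := by
    exact_mod_cast congrArg (Nat.cast (R := ℝ)) h2
  linear_combination -c1 - c2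

lemma conv_br : ∀ N a s, a + s ≤ N → s ≤ a →
    ∑ j ∈ Finset.range (s+1), (catalan j : ℝ) * Br (a-1-j) (s-j) = Br a s := by
  intro N
  induction N with
  | zero =>
    intro a s h1 h2
    have ha : a = 0 := by omega
    have hs : s = 0 := by omega
    subst ha; subst hs
    rw [Finset.sum_range_one]
    show (catalan 0 : ℝ) * Br 0 0 = Br 0 0
    rw [catalan_zero, Br_zero]
    norm_num
  | succ N IHN =>
    intro a s h1 h2
    rcases Nat.eq_zero_or_pos s with rfl | hs
    · rw [Finset.sum_range_one]
      show (catalan 0 : ℝ) * Br (a-1) 0 = Br a 0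
      rw [catalan_zero, Br_zero, Br_zero]
      norm_num
    · rcases Nat.lt_or_ge s a with hsa | hsa
      · obtain ⟨s', rfl⟩ : ∃ s', s = s'+1 := ⟨s-1, by omega⟩
        have hterm : ∀ j ∈ Finset.range (s'+2), (catalan j : ℝ) * Br (a-1-j) (s'+1-j)
            = (catalan j : ℝ) * Br (a-1-1-j) (s'+1-j)
              + (if j ≤ s' then (catalan j : ℝ) * Br (a-1-j) (s'-j) else 0) := by
          intro j hj
          simp only [Finset.mem_range] at hj
          rcases Nat.lt_or_ge j (s'+1) with hj1 | hj1
          · rw [if_pos (by omega)]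
            have e1 : a-1-j = (a-2-j)+1 := by omega
            have e2 : s'+1-j = (s'-j)+1 := by omega
            rw [e1, e2, Br_pascal, ← e2, ← e1, show a-1-1-j = a-2-j by omega]
            ring
          · have hj2 : j = s'+1 := by omega
            rw [if_neg (by omega), hj2, show s'+1-(s'+1) = 0 by omega, Br_zero, Br_zero]
            ring
        rw [Finset.sum_congr rfl hterm, Finset.sum_add_distrib]
        have hA := IHN (a-1) (s'+1) (by omega) (by omega)
        have hB := IHN a s' (by omega) (by omega)
        have hsecond : (∑ j ∈ Finset.range (s'+2),
            if j ≤ s' then (catalan j : ℝ) * Br (a-1-j) (s'-j) else 0)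
            = ∑ j ∈ Finset.range (s'+1), (catalan j : ℝ) * Br (a-1-j) (s'-j) := by
          rw [← Finset.sum_filter]
          apply Finset.sum_congr ?_ (fun _ _ => rfl)
          ext j
          simp only [Finset.mem_filter, Finset.mem_range]
          omega
        rw [hsecond, hA, hB]
        obtain ⟨a', rfl⟩ : ∃ a', a = a'+1 := ⟨a-1, by omega⟩
        rw [show a'+1-1 = a' by omega]
        exact (Br_pascal a' s').symm
      · have hsa' : a = s := by omega
        subst hsa'
        have hterm : ∀ j ∈ Finset.range (a+1), (catalan j : ℝ) * Br (a-1-j) (a-j)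
            = if j = a then (catalan a : ℝ) else 0 := by
          intro j hj
          simp only [Finset.mem_range] at hj
          rcases eq_or_ne j a with rfl | hne
          · rw [if_pos rfl, show j-j = 0 by omega, Br_zero, mul_one]
          · rw [if_neg hne, show a-j = (a-1-j)+1 by omega, Br_diag_zero, mul_zero]
        rw [Finset.sum_congr rfl hterm, Finset.sum_ite_eq' (Finset.range (a+1)) a
          (fun _ => (catalan a : ℝ)), if_pos (Finset.mem_range.mpr (by omega)),
          Br_catalan]

/-! connecting `EE` with `fReturn` -/

lemma EE_zero_of_lt : ∀ m d, d < m → EE d m = 0 := by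
  intro m
  induction m with
  | zero => intro d h; omega
  | succ m IH =>
    intro d h
    rw [EE_succ]
    apply Finset.sum_eq_zero
    intro l hl
    simp only [Finset.mem_Icc] at hl
    rw [IH (d-l) (by omega), mul_zero]

lemma TB (d m : ℕ) (h1 : 1 ≤ m) (h2 : m ≤ d) :
    (m : ℝ) / ((2*d - m : ℕ) : ℝ) * (Nat.choose (2*d - m) d : ℝ) = Br (d-1) (d-m) := by
  have hA1 : (2*d - m) * Nat.choose (2*d-m-1) (d-1) = d * Nat.choose (2*d-m) d := by
    have h := Nat.add_one_mul_choose_eq (2*d-m-1) (d-1)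
    rw [show (2*d-m-1)+1 = 2*d-m by omega,
      show (d-1)+1 = d by omega] at h
    rw [h, Nat.mul_comm]
  have hA2 : (2*d - m) * Nat.choose (2*d-m-1) d = (d - m) * Nat.choose (2*d-m) d := by
    rcases Nat.eq_or_lt_of_le h2 with rfl | hlt
    · rw [Nat.choose_eq_zero_of_lt (by omega), show m - m = 0 by omega]
      simp
    · have hsym1 : Nat.choose (2*d-m-1) d = Nat.choose (2*d-m-1) (d-m-1) := by
        have := Nat.choose_symm (show d ≤ 2*d-m-1 by omega)
        rw [show 2*d-m-1-d = d-m-1 by omega] at this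
        exact this.symm
      have h := Nat.add_one_mul_choose_eq (2*d-m-1) (d-m-1)
      rw [show (2*d-m-1)+1 = 2*d-m by omega,
        show (d-m-1)+1 = d-m by omega] at h
      have hsym2 : Nat.choose (2*d-m) (d-m) = Nat.choose (2*d-m) d := by
        have := Nat.choose_symm (show d ≤ 2*d-m by omega)
        rw [show 2*d-m-d = d-m by omega] at this
        exact this
      rw [hsym1, h, hsym2, Nat.mul_comm]
  have hsym : Nat.choose (2*d-m-1) (d-m) = Nat.choose (2*d-m-1) (d-1) := by
    have := Nat.choose_symm (show d-1 ≤ 2*d-m-1 by omega)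
    rw [show 2*d-m-1-(d-1) = d-m by omega] at this
    exact this
  unfold Br
  rw [show (d-1)+(d-m) = 2*d-m-1 by omega, show (d-1)+1 = d by omega, hsym]
  have hne : ((2*d - m : ℕ) : ℝ) ≠ 0 := Nat.cast_ne_zero.mpr (by omega)
  rw [div_mul_eq_mul_div, div_eq_iff hne]
  have c1 : ((2*d-m:ℕ):ℝ) * (Nat.choose (2*d-m-1) (d-1) : ℝ)
      = (d:ℝ) * (Nat.choose (2*d-m) d : ℝ) := by exact_mod_cast congrArg (Nat.cast (R := ℝ)) hA1
  have c2 : ((2*d-m:ℕ):ℝ) * (Nat.choose (2*d-m-1) d : ℝ)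
      = ((d-m:ℕ):ℝ) * (Nat.choose (2*d-m) d : ℝ) := by
    exact_mod_cast congrArg (Nat.cast (R := ℝ)) hA2
  have c3 : ((d-m:ℕ):ℝ) = (d:ℝ) - (m:ℝ) := by
    push_cast [Nat.cast_sub h2]
    ring
  rw [c3] at c2
  linear_combination c2 - c1

lemma EE_eq_fReturn : ∀ m d, 1 ≤ m → m ≤ d → EE d m = fReturn d m := by
  intro m
  induction m with
  | zero => intro d h; omega
  | succ m IH =>
    intro d h1 h2
    rcases Nat.eq_zero_or_pos m with rfl | hm
    · rw [EE_succ]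
      have hterm : ∀ l ∈ Finset.Icc 1 d, ((Ecnt l:ℝ) * (1/2:ℝ)^(2*l-1)) * EE (d-l) 0
          = if l = d then ((Ecnt l:ℝ) * (1/2:ℝ)^(2*l-1)) else 0 := by
        intro l hl
        simp only [Finset.mem_Icc] at hl
        rcases eq_or_ne l d with rfl | hne
        · rw [if_pos rfl, EE_zero, if_pos (by omega), mul_one]
        · rw [if_neg hne, EE_zero, if_neg (by omega), mul_zero]
      rw [Finset.sum_congr rfl hterm,
        Finset.sum_ite_eq' (Finset.Icc 1 d) d (fun l => ((Ecnt l:ℝ) * (1/2:ℝ)^(2*l-1))),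
        if_pos (Finset.mem_Icc.mpr ⟨by omega, le_rfl⟩)]
      have hTB := TB d 1 le_rfl (by omega)
      rw [show d - 1 = d - 1 from rfl] at hTB
      unfold fReturn
      rw [Ecnt_catalan (show 1 ≤ d by omega), ← Br_catalan (d-1), ← hTB]
      push_cast
      ring
    · rw [EE_succ]
      have hterm : ∀ l ∈ Finset.Icc 1 d, ((Ecnt l:ℝ)*(1/2:ℝ)^(2*l-1)) * EE (d-l) m
          = if l ≤ d - m then ((Ecnt l:ℝ)*(1/2:ℝ)^(2*l-1)) * fReturn (d-l) m else 0 := by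
        intro l hl
        simp only [Finset.mem_Icc] at hl
        rcases Nat.lt_or_ge (d-m) l with h | h
        · rw [if_neg (by omega), EE_zero_of_lt m (d-l) (by omega), mul_zero]
        · rw [if_pos h, IH (d-l) hm (by omega)]
      rw [Finset.sum_congr rfl hterm, ← Finset.sum_filter]
      have hfil : (Finset.Icc 1 d).filter (fun l => l ≤ d - m) = Finset.Icc 1 (d-m) := by
        ext l
        simp only [Finset.mem_filter, Finset.mem_Icc]
        omega
      rw [hfil]
      have hterm2 : ∀ l ∈ Finset.Icc 1 (d-m), ((Ecnt l:ℝ)*(1/2:ℝ)^(2*l-1)) * fReturn (d-l) m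
          = (1/2:ℝ)^(2*d-(m+1)) * ((catalan (l-1) : ℝ) * Br (d-l-1) (d-l-m)) := by
        intro l hl
        simp only [Finset.mem_Icc] at hl
        have hTB := TB (d-l) m hm (by omega)
        unfold fReturn
        rw [Ecnt_catalan hl.1, ← hTB,
          show 2*d-(m+1) = (2*l-1) + (2*(d-l)-m) by omega, pow_add]
        ring
      rw [Finset.sum_congr rfl hterm2, ← Finset.mul_sum]
      have hconv := conv_br (2*d) (d-1) (d-m-1) (by omega) (by omega)
      have hre : (∑ l ∈ Finset.Icc 1 (d-m), (catalan (l-1) : ℝ) * Br (d-l-1) (d-l-m))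
          = ∑ j ∈ Finset.range (d-m-1+1), (catalan j : ℝ) * Br (d-1-1-j) (d-m-1-j) := by
        refine Finset.sum_bij' (fun l _ => l - 1) (fun j _ => j + 1) ?_ ?_ ?_ ?_ ?_
        · intro l hl
          simp only [Finset.mem_Icc] at hl
          simp only [Finset.mem_range]
          omega
        · intro j hj
          simp only [Finset.mem_range] at hj
          simp only [Finset.mem_Icc]
          omega
        · intro l hl
          simp only [Finset.mem_Icc] at hl
          omega
        · intro j _
          omega
        · intro l hl
          simp only [Finset.mem_Icc] at hl
          rw [show d-1-1-(l-1) = d-l-1 by omega, show d-m-1-(l-1) = d-l-m by omega]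
      rw [hre, hconv]
      have hTB := TB d (m+1) (by omega) h2
      unfold fReturn
      rw [show d-m-1 = d-(m+1) by omega, ← hTB]
      ring

/-! conclusion -/

lemma final (p q : ℝ) (r r₁ k i : ℕ) (hi1 : 1 ≤ i) (hik : i ≤ k - 1) (hir : i ≤ r₁)
    (hki : k - i ≤ r - r₁) (hr₁ : 1 ≤ r₁) (hr : r₁ ≤ r - 1) :
    ∑ σ ∈ setA r r₁ k i, pathWeight p q σ
      = (Nat.choose k i : ℝ) * p ^ i * q ^ (k - i) * fReturn r₁ i * fReturn (r - r₁) (k - i) := by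
  have hrge : 2 ≤ r := by omega
  rw [main_sum p q k r r₁ (r - r₁) i (by omega),
    EE_eq_fReturn i r₁ hi1 hir,
    EE_eq_fReturn (k-i) (r-r₁) (by omega) hki]

end SK

/-- The total weight of `A(r, r₁, k, i)` equals
`C(k, i) · p^i · q^{k−i} · f(2r₁, i) · f(2(r−r₁), k−i)`. -/
theorem totalWeight_setA (p q : ℝ) (hp : p ∈ Set.Ioo (0:ℝ) 1) (hq : q = 1 - p)
    (r r₁ k i : ℕ) (hi1 : 1 ≤ i) (hik : i ≤ k - 1) (hir : i ≤ r₁) (hki : k - i ≤ r - r₁)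
    (hr₁ : 1 ≤ r₁) (hr : r₁ ≤ r - 1) :
    ∑ σ ∈ setA r r₁ k i, pathWeight p q σ
      = (Nat.choose k i : ℝ) * p ^ i * q ^ (k - i) * fReturn r₁ i * fReturn (r - r₁) (k - i) := by
  exact SK.final p q r r₁ k i hi1 hik hir hki hr₁ hr
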